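/- Let G be a Monge DAG on {s,...,N}, λ ∈ ℝ, and (m,n) with n ∈ {s+1,...,N}, 1 ≤ m ≤ n-s. Let f(m,n) be the minimum length of m-link s-n paths, and define δ(m,n) = f(m+1,n) - f(m,n) (with f(0,n) = f(n-s+1,n) = +∞). Let G(λ) be G with λ subtracted from every edge length, and d_min(λ,n) the least link count among shortest s-n paths in G(λ). Then d_min(λ,n) ≤ m if and only if λ ≤ δ(m,n). -/

import Mathlib

/-!
The Monge property makes `k ↦ f(k,n)` discretely convex: a `k`-link and a `(k+2)`-link
`s`-`n` path must cross, and exchanging their tails at the crossing yields two `(k+1)`-link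
paths of no larger total length. Hence `g(k) = f(k,n) - kλ`, whose minimizers are the link
counts of shortest paths in `G(λ)`, is convex, and its least minimizer is at most `m` exactly
when `g` does not decrease from `m` to `m+1`, i.e. when `λ ≤ δ(m,n)`.
-/

/-- A Monge (submodular) edge-length function on the complete DAG on `{s,...,N}`. -/
def IsMonge (s N : ℕ) (c : ℕ → ℕ → ℝ) : Prop :=
  ∀ i₁ i₂ j₂ j₁ : ℕ, s ≤ i₁ → i₁ < i₂ → i₂ < j₂ → j₂ < j₁ → j₁ ≤ N →
    c i₁ j₂ + c i₂ j₁ ≤ c i₁ j₁ + c i₂ j₂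

/-- `v 0, v 1, ..., v m` is an `m`-link path from `a` to `b` inside `{s,...,N}`. -/
def IsPath (s N a b m : ℕ) (v : ℕ → ℕ) : Prop :=
  v 0 = a ∧ v m = b ∧ (∀ k < m, v k < v (k + 1)) ∧ s ≤ a ∧ b ≤ N

/-- The length of the `m`-link path `v 0, ..., v m` under edge lengths `c`. -/
def pathLen (c : ℕ → ℕ → ℝ) (m : ℕ) (v : ℕ → ℕ) : ℝ :=
  ∑ k ∈ Finset.range m, c (v k) (v (k + 1))

/-- The set of lengths of `m`-link `a`-`b` paths in the complete DAG on `{s,...,N}`. -/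
def pathLens (s N a b m : ℕ) (c : ℕ → ℕ → ℝ) : Set ℝ :=
  {x | ∃ v, IsPath s N a b m v ∧ pathLen c m v = x}

/-- The set of link counts of shortest `s`-`n` paths in `G(lam)`
    (the graph with `lam` subtracted from every edge length). -/
def DSet (s N n : ℕ) (c : ℕ → ℕ → ℝ) (lam : ℝ) : Set ℕ :=
  {m | ∃ v, IsPath s N s n m v ∧
    ∀ m' w, IsPath s N s n m' w →
      pathLen c m v - m * lam ≤ pathLen c m' w - m' * lam}

/-- The set of lengths of all `s`-`n` paths (any number of links). -/
def allLens (s N n : ℕ) (c : ℕ → ℕ → ℝ) : Set ℝ :=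
  {x | ∃ m v, IsPath s N s n m v ∧ pathLen c m v = x}

open Set

section Paths

variable {s N a b m : ℕ} {v : ℕ → ℕ}

theorem IsPath.strictMonoOn (h : IsPath s N a b m v) : StrictMonoOn v (Iic m) :=
  strictMonoOn_Iic_of_lt_succ fun k hk => by simpa using h.2.2.1 k hk

theorem IsPath.mem_Icc (h : IsPath s N a b m v) {i : ℕ} (hi : i ≤ m) : v i ∈ Icc s N := by
  have hmono := h.strictMonoOn.monotoneOn
  obtain ⟨h0, hm, -, hsa, hbN⟩ := h
  have h₁ : v 0 ≤ v i := hmono (mem_Iic.2 (Nat.zero_le m)) (mem_Iic.2 hi) (Nat.zero_le i)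
  have h₂ : v i ≤ v m := hmono (mem_Iic.2 hi) (mem_Iic.2 le_rfl) hi
  exact ⟨by omega, by omega⟩

theorem IsPath.add_le_apply (h : IsPath s N a b m v) {j : ℕ} (hj : j ≤ m) : a + j ≤ v j := by
  induction j with
  | zero => exact h.1.ge
  | succ j ih => have := h.2.2.1 j hj; have := ih (by omega); omega

theorem IsPath.mem_Icc_sub (h : IsPath s N a b m v) (hab : a < b) : m ∈ Icc 1 (b - a) := by
  have hle := h.add_le_apply le_rfl
  rw [h.2.1] at hle
  refine ⟨Nat.one_le_iff_ne_zero.2 fun hm => ?_, by omega⟩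
  subst hm
  have := h.1.symm.trans h.2.1
  omega

end Paths

def segLen (c : ℕ → ℕ → ℝ) (v : ℕ → ℕ) (i j : ℕ) : ℝ :=
  ∑ k ∈ Finset.Ico i j, c (v k) (v (k + 1))

theorem pathLen_eq_segLen_add (c : ℕ → ℕ → ℝ) (v : ℕ → ℕ) {m t : ℕ} (ht : t < m) :
    pathLen c m v = segLen c v 0 t + c (v t) (v (t + 1)) + segLen c v (t + 1) m := by
  rw [pathLen, Finset.range_eq_Ico, segLen, segLen,
    ← Finset.sum_Ico_consecutive _ (Nat.zero_le (t + 1)) ht,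
    Finset.sum_Ico_succ_top (Nat.zero_le t)]

/-- Follow `u` up to index `t`, then jump to `w` at index `t' + 1`. -/
def splice (u : ℕ → ℕ) (t : ℕ) (w : ℕ → ℕ) (t' : ℕ) : ℕ → ℕ :=
  fun j => if j ≤ t then u j else w (j - t + t')

section Splice

variable {s N a b x y l t t' M : ℕ} {u w : ℕ → ℕ}

theorem isPath_splice (hu : IsPath s N a x l u) (hw : IsPath s N y b M w) (ht : t ≤ l)
    (ht' : t' < M) (hlt : u t < w (t' + 1)) {K : ℕ} (hK : K + t' = t + M) :
    IsPath s N a b K (splice u t w t') := by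
  refine ⟨by simp [splice, hu.1], ?_, fun j hj => ?_, hu.2.2.2.1, hw.2.2.2.2⟩
  · simp only [splice, if_neg (show ¬K ≤ t by omega), show K - t + t' = M by omega, hw.2.1]
  · simp only [splice]
    split_ifs with h1 h2 h2
    · exact hu.2.2.1 j (by omega)
    · rwa [show j = t by omega, show t + 1 - t + t' = t' + 1 by omega]
    · omega
    · rw [show j + 1 - t + t' = j - t + t' + 1 by omega]
      exact hw.2.2.1 _ (by omega)

theorem pathLen_splice (c : ℕ → ℕ → ℝ) (ht' : t' < M) {K : ℕ} (hK : K + t' = t + M) :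
    pathLen c K (splice u t w t') =
      segLen c u 0 t + c (u t) (w (t' + 1)) + segLen c w (t' + 1) M := by
  have h_head : segLen c (splice u t w t') 0 t = segLen c u 0 t := by
    refine Finset.sum_congr rfl fun j hj => ?_
    have := (Finset.mem_Ico.1 hj).2
    simp only [splice, if_pos this.le, if_pos (show j + 1 ≤ t by omega)]
  have h_jump : c (splice u t w t' t) (splice u t w t' (t + 1)) = c (u t) (w (t' + 1)) := by
    simp only [splice, le_refl, if_true, if_neg (show ¬t + 1 ≤ t by omega),
      show t + 1 - t + t' = t' + 1 by omega]
  have h_tail : segLen c (splice u t w t') (t + 1) K = segLen c w (t' + 1) M := by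
    simp only [segLen, Finset.sum_Ico_eq_sum_range, show K - (t + 1) = M - (t' + 1) by omega]
    refine Finset.sum_congr rfl fun j _ => ?_
    simp only [splice, if_neg (show ¬t + 1 + j ≤ t by omega),
      if_neg (show ¬t + 1 + j + 1 ≤ t by omega), show t + 1 + j - t + t' = t' + 1 + j by omega,
      show t + 1 + j + 1 - t + t' = t' + 1 + j + 1 by omega]
  rw [pathLen_eq_segLen_add c _ (show t < K by omega), h_head, h_jump, h_tail]

end Splice

theorem Nat.exists_lt_and_not_succ {P : ℕ → Prop} {k : ℕ} (h0 : P 0) (hk : ¬P k) :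
    ∃ i < k, P i ∧ ¬P (i + 1) := by
  induction k with
  | zero => exact absurd h0 hk
  | succ k ih =>
    by_cases h : P k
    · exact ⟨k, k.lt_succ_self, h, hk⟩
    · obtain ⟨i, hi, hPi, hPi'⟩ := ih h
      exact ⟨i, by omega, hPi, hPi'⟩

section Monge

variable {s N : ℕ} {c : ℕ → ℕ → ℝ}

theorem IsMonge.add_le_add_of_le (hc : IsMonge s N c) {i₁ i₂ j₂ j₁ : ℕ} (h₁ : s ≤ i₁)
    (h₂ : i₁ < i₂) (h₃ : i₂ < j₂) (h₄ : j₂ ≤ j₁) (h₅ : j₁ ≤ N) :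
    c i₁ j₂ + c i₂ j₁ ≤ c i₁ j₁ + c i₂ j₂ := by
  rcases h₄.eq_or_lt with rfl | h₄
  · rfl
  · exact hc i₁ i₂ j₂ j₁ h₁ h₂ h₃ h₄ h₅

theorem IsMonge.exists_exchange (hc : IsMonge s N c) {a b k : ℕ} {p q : ℕ → ℕ}
    (hp : IsPath s N a b k p) (hq : IsPath s N a b (k + 2) q) :
    ∃ R R', IsPath s N a b (k + 1) R ∧ IsPath s N a b (k + 1) R' ∧
      pathLen c (k + 1) R + pathLen c (k + 1) R' ≤ pathLen c k p + pathLen c (k + 2) q := by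
  have hq_lt := hq.2.2.1
  obtain ⟨i, hik, hcross, hcross'⟩ := Nat.exists_lt_and_not_succ (P := fun i => p i < q (i + 1))
    (by have := hq_lt 0 (by omega); rw [hp.1, ← hq.1]; exact this)
    (by have : q (k + 1) < q (k + 2) := hq_lt (k + 1) (by omega); rw [hp.2.1, ← hq.2.1]; omega)
  simp only [not_lt] at hcross'
  -- the crossing: `p i < q (i + 1) < q (i + 2) ≤ p (i + 1)`
  have hqi := hq_lt (i + 1) (by omega)
  refine ⟨splice q (i + 1) p i, splice p i q (i + 1),
    isPath_splice (K := k + 1) hq hp (by omega) hik (by omega) (by omega),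
    isPath_splice (K := k + 1) hp hq hik.le (by omega) (by omega) (by omega), ?_⟩
  rw [pathLen_splice (K := k + 1) c hik (by omega),
    pathLen_splice (K := k + 1) (t := i) c (show i + 1 < k + 2 by omega) (by omega),
    pathLen_eq_segLen_add c p hik, pathLen_eq_segLen_add c q (show i + 1 < k + 2 by omega)]
  have := hc.add_le_add_of_le (hp.mem_Icc hik.le).1 hcross hqi hcross' (hp.mem_Icc hik).2
  linarith

theorem IsMonge.add_le_add_of_mem_pathLens (hc : IsMonge s N c) {a b k : ℕ} {x y z : ℝ}
    (hx : x ∈ pathLens s N a b k c) (hy : y ∈ lowerBounds (pathLens s N a b (k + 1) c))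
    (hz : z ∈ pathLens s N a b (k + 2) c) : y + y ≤ x + z := by
  obtain ⟨p, hp, rfl⟩ := hx
  obtain ⟨q, hq, rfl⟩ := hz
  obtain ⟨R, R', hR, hR', hle⟩ := hc.exists_exchange hp hq
  linarith [hy ⟨R, hR, rfl⟩, hy ⟨R', hR', rfl⟩]

end Monge

theorem le_iff_of_isLeast_minimizers {g : ℕ → ℝ} {L d m : ℕ}
    (hg : ∀ k, 1 ≤ k → k + 2 ≤ L → g (k + 1) + g (k + 1) ≤ g k + g (k + 2))
    (hd : IsLeast {k ∈ Icc 1 L | IsMinOn g (Icc 1 L) k} d) (hm1 : 1 ≤ m) (hmL : m < L) :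
    d ≤ m ↔ g m ≤ g (m + 1) := by
  have hD : MonotoneOn (fun k => g (k + 1) - g k) (Ico 1 L) :=
    monotoneOn_of_le_succ ordConnected_Ico fun k _ hk hk' => by
      simp only [Order.succ_eq_add_one, mem_Ico] at hk hk' ⊢
      linarith [hg k hk.1 (by omega)]
  have hDm : ∀ k ∈ Ico 1 L, k ≤ m → g (k + 1) - g k ≤ g (m + 1) - g m :=
    fun k hk hkm => hD hk ⟨hm1, hmL⟩ hkm
  have hdL := hd.1.1
  constructor
  · intro hdm
    by_contra! hdec
    have hanti : StrictAntiOn g (Icc 1 (m + 1)) :=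
      strictAntiOn_of_succ_lt ordConnected_Icc fun k _ hk hk' => by
        simp only [Order.succ_eq_add_one, mem_Icc] at hk hk' ⊢
        linarith [hDm k ⟨hk.1, by omega⟩ (by omega)]
    have := hanti ⟨hdL.1, by omega⟩ ⟨by omega, le_rfl⟩ (by omega)
    exact this.not_ge (hd.1.2 ⟨by omega, by omega⟩)
  · intro hinc
    by_contra! hmd
    have hmono : MonotoneOn g (Icc m L) :=
      monotoneOn_of_le_succ ordConnected_Icc fun k _ hk hk' => by
        simp only [Order.succ_eq_add_one, mem_Icc] at hk hk' ⊢
        have := hD ⟨hm1, hmL⟩ ⟨by omega, by omega⟩ hk.1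
        simp only at this
        linarith
    have hmin : IsMinOn g (Icc 1 L) m := fun j hj =>
      (hmono ⟨le_rfl, hmL.le⟩ ⟨hmd.le, hdL.2⟩ hmd.le).trans (hd.1.2 hj)
    exact (hd.2 ⟨⟨hm1, hmL.le⟩, hmin⟩).not_gt hmd

theorem DSet_eq_minimizers {s N n : ℕ} {c : ℕ → ℕ → ℝ} {f : ℕ → ℝ} (lam : ℝ)
    (hf : ∀ k, 1 ≤ k → s + k ≤ n → IsLeast (pathLens s N s n k c) (f k)) (hsn : s < n) :
    DSet s N n c lam =
      {k ∈ Icc 1 (n - s) | IsMinOn (fun k : ℕ => f k - k * lam) (Icc 1 (n - s)) k} := by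
  have hlow : ∀ k v, IsPath s N s n k v → k ∈ Icc 1 (n - s) ∧ f k ≤ pathLen c k v :=
    fun k v hv => have hk := hv.mem_Icc_sub hsn
      ⟨hk, (hf k hk.1 (by have := hk.2; omega)).2 ⟨v, hv, rfl⟩⟩
  ext k
  constructor
  · rintro ⟨v, hv, hopt⟩
    obtain ⟨hk, hfv⟩ := hlow k v hv
    refine ⟨hk, fun j hj => ?_⟩
    obtain ⟨w, hw, hwf⟩ := (hf j hj.1 (by have := hj.2; omega)).1
    have := hopt j w hw
    show f k - k * lam ≤ f j - j * lam
    linarith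
  · rintro ⟨hk, hmin⟩
    obtain ⟨v, hv, hvf⟩ := (hf k hk.1 (by have := hk.2; omega)).1
    refine ⟨v, hv, fun j w hw => ?_⟩
    obtain ⟨hj, hfw⟩ := hlow j w hw
    have : f k - k * lam ≤ f j - j * lam := hmin hj
    linarith

theorem stmt10_general (s N n m : ℕ) (c : ℕ → ℕ → ℝ) (hc : IsMonge s N c)
    (f : ℕ → ℕ → ℝ)
    (hf : ∀ k j, 1 ≤ k → s + k ≤ j → j ≤ N → IsLeast (pathLens s N s j k c) (f k j))
    (lam : ℝ) (hn2 : n ≤ N) (hm1 : 1 ≤ m) (hm2 : s + m ≤ n)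
    (dmin : ℕ) (hd : IsLeast (DSet s N n c lam) dmin) :
    (s + m < n → (dmin ≤ m ↔ lam ≤ f (m + 1) n - f m n)) ∧
    (s + m = n → dmin ≤ m) := by
  have hfn : ∀ k, 1 ≤ k → s + k ≤ n → IsLeast (pathLens s N s n k c) (f k n) :=
    fun k hk hkn => hf k n hk hkn hn2
  rw [DSet_eq_minimizers lam hfn (by omega)] at hd
  refine ⟨fun hmn => ?_, fun hmn => by have := hd.1.1.2; omega⟩
  have hconv (k : ℕ) (hk : 1 ≤ k) (hkL : k + 2 ≤ n - s) :=
    hc.add_le_add_of_mem_pathLens (hfn k hk (by omega)).1 (hfn (k + 1) (by omega) (by omega)).2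
      (hfn (k + 2) (by omega) (by omega)).1
  rw [le_iff_of_isLeast_minimizers (fun k hk hkL => ?_) hd hm1 (by omega)]
  · push_cast
    constructor <;> intro h <;> linarith
  · push_cast
    linarith [hconv k hk hkL]

/-- `d_min(lam, n) ≤ m` iff `lam ≤ δ(m,n) = f(m+1,n) - f(m,n)`
(with `δ(n-s, n) = +∞`, i.e. the bound holds unconditionally for `m = n - s`). -/
theorem stmt10 (s N n m : ℕ) (c : ℕ → ℕ → ℝ) (hc : IsMonge s N c)
    (f : ℕ → ℕ → ℝ)
    (hf : ∀ k j, 1 ≤ k → s + k ≤ j → j ≤ N → IsLeast (pathLens s N s j k c) (f k j))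
    (lam : ℝ) (hn1 : s + 1 ≤ n) (hn2 : n ≤ N) (hm1 : 1 ≤ m) (hm2 : s + m ≤ n)
    (dmin : ℕ) (hd : IsLeast (DSet s N n c lam) dmin) :
    (s + m < n → (dmin ≤ m ↔ lam ≤ f (m + 1) n - f m n)) ∧
    (s + m = n → dmin ≤ m) :=
  stmt10_general s N n m c hc f hf lam hn2 hm1 hm2 dmin hd
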